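/- For integers m ≥ 0 and n ≥ 1 and any real a, ∑_{j=0}^m (-4)^j C(m+j, 2j) ∑_{k=0}^{n-1} sin(a+2kπ/n) cos(a+2kπ/n)^{2j} = (-1)^m ∑_{k=0}^{n-1} sin((2m+1)(a + 2kπ/n)). -/

import Mathlib

/-!
After exchanging the two sums, the `k`-th term is `P_m(cos θ) sin θ` with `θ = a + 2kπ/n` and
`P_m(c) = ∑ⱼ (-4)ʲ C(m+j, 2j) c²ʲ`. The polynomials `P_m` satisfy the same three-term recurrence as
`(-1)ᵐ U₂ₘ`, where `U` is the Chebyshev polynomial of the second kind, so `P_m = (-1)ᵐ U₂ₘ`; and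
`U₂ₘ(cos θ) sin θ = sin((2m+1)θ)`. The identity therefore holds term by term, for arbitrary angles.
-/

open Real Finset

theorem Nat.choose_add_two_add_choose (n k : ℕ) :
    (n + 2).choose (k + 2) + n.choose (k + 2) = 2 * (n + 1).choose (k + 2) + n.choose k := by
  rw [Nat.choose_succ_succ' (n + 1), Nat.choose_succ_succ' n (k + 1), Nat.choose_succ_succ' n k]
  ring

section altChooseSum

variable {R : Type*} [CommRing R]

def altChooseSum (m : ℕ) (x : R) : R :=
  ∑ j ∈ range (m + 1), (-4) ^ j * ((m + j).choose (2 * j) : R) * x ^ (2 * j)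

theorem altChooseSum_eq_sum_range {m N : ℕ} (hN : m + 1 ≤ N) (x : R) :
    altChooseSum m x = ∑ j ∈ range N, (-4) ^ j * ((m + j).choose (2 * j) : R) * x ^ (2 * j) := by
  refine sum_subset (range_subset_range.2 hN) fun j _ hj => ?_
  rw [mem_range, not_lt] at hj
  rw [Nat.choose_eq_zero_of_lt (by omega), Nat.cast_zero, mul_zero, zero_mul]

theorem altChooseSum_add_two (m : ℕ) (x : R) :
    altChooseSum (m + 2) x = (2 - 4 * x ^ 2) * altChooseSum (m + 1) x - altChooseSum m x := by
  set c : ℕ → ℕ → R := fun m j => (-4) ^ j * ((m + j).choose (2 * j) : R) * x ^ (2 * j) with hc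
  have hterm (j : ℕ) :
      c (m + 2) (j + 1) = 2 * c (m + 1) (j + 1) - c m (j + 1) - 4 * x ^ 2 * c (m + 1) j := by
    have h := congrArg (Nat.cast : ℕ → R) (Nat.choose_add_two_add_choose (m + j + 1) (2 * j))
    push_cast at h
    simp only [hc, show m + 2 + (j + 1) = m + j + 1 + 2 by ring,
      show m + 1 + (j + 1) = m + j + 1 + 1 by ring, show m + (j + 1) = m + j + 1 by ring,
      show m + 1 + j = m + j + 1 by ring, show 2 * (j + 1) = 2 * j + 2 by ring]
    linear_combination (-4 : R) ^ (j + 1) * x ^ (2 * j + 2) * h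
  have hsplit (k : ℕ) (hk : k ≤ m + 2) :
      altChooseSum k x = ∑ j ∈ range (m + 2), c k (j + 1) + 1 := by
    rw [altChooseSum_eq_sum_range (by omega : k + 1 ≤ m + 2 + 1), sum_range_succ']
    simp [hc]
  have hmid : altChooseSum (m + 1) x = ∑ j ∈ range (m + 2), c (m + 1) j := rfl
  rw [hsplit (m + 2) le_rfl, hsplit m (by omega), sum_congr rfl fun j _ => hterm j,
    sum_sub_distrib, sum_sub_distrib, ← mul_sum, ← mul_sum, ← hmid]
  linear_combination -2 * hsplit (m + 1) (by omega)

open Polynomial in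
theorem Polynomial.eval_altChooseSum_X (m : ℕ) (x : R) :
    (altChooseSum m (X : R[X])).eval x = altChooseSum m x := by
  simp [altChooseSum, eval_finsetSum]

end altChooseSum

section Chebyshev

open Polynomial Chebyshev

variable (R : Type*) [CommRing R]

theorem Polynomial.Chebyshev.U_two_mul_add_four (n : ℤ) :
    U R (2 * n + 4) = (4 * X ^ 2 - 2) * U R (2 * n + 2) - U R (2 * n) := by
  have h₀ := U_add_two R (2 * n)
  have h₁ := U_add_two R (2 * n + 1)
  have h₂ := U_add_two R (2 * n + 2)
  rw [show 2 * n + 1 + 1 = 2 * n + 2 by ring, show 2 * n + 1 + 2 = 2 * n + 3 by ring] at *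
  rw [show 2 * n + 2 + 1 = 2 * n + 3 by ring, show 2 * n + 2 + 2 = 2 * n + 4 by ring] at h₂
  linear_combination h₂ + 2 * X * h₁ + h₀

theorem Polynomial.Chebyshev.U_two_mul_eq_altChooseSum (m : ℕ) :
    U R (2 * m) = (-1) ^ m * altChooseSum m (X : R[X]) := by
  induction m using Nat.twoStepInduction with
  | zero => simp [altChooseSum]
  | one =>
    rw [Nat.cast_one, mul_one, U_two, altChooseSum, sum_range_succ, sum_range_one]
    norm_num
    ring
  | more m ih₀ ih₁ =>
    push_cast at ih₁ ⊢
    rw [show 2 * ((m : ℤ) + 2) = 2 * m + 4 by ring, U_two_mul_add_four,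
      show 2 * (m : ℤ) + 2 = 2 * (m + 1) by ring, ih₀, ih₁, altChooseSum_add_two]
    ring

end Chebyshev

theorem altChooseSum_cos_mul_sin (m : ℕ) (θ : ℝ) :
    altChooseSum m (cos θ) * sin θ = (-1) ^ m * sin ((2 * m + 1) * θ) := by
  have h := Polynomial.Chebyshev.U_real_cos θ (2 * m)
  rw [Polynomial.Chebyshev.U_two_mul_eq_altChooseSum, Polynomial.eval_mul, Polynomial.eval_pow,
    Polynomial.eval_neg, Polynomial.eval_one, Polynomial.eval_altChooseSum_X] at h
  push_cast at h
  rw [← h, ← mul_assoc, ← mul_assoc, ← mul_pow, neg_one_mul, neg_neg, one_pow, one_mul]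

theorem stmt_16_general (m n : ℕ) (a : ℝ) :
    ∑ j ∈ Finset.range (m + 1), (-4 : ℝ) ^ j * (Nat.choose (m + j) (2 * j)) *
      ∑ k ∈ Finset.range n, Real.sin (a + 2 * k * π / n) * Real.cos (a + 2 * k * π / n) ^ (2 * j)
    = (-1 : ℝ) ^ m * ∑ k ∈ Finset.range n, Real.sin ((2 * m + 1) * (a + 2 * k * π / n)) := by
  simp only [mul_sum]
  rw [sum_comm]
  refine sum_congr rfl fun k _ => ?_
  rw [← altChooseSum_cos_mul_sin, altChooseSum, sum_mul]
  exact sum_congr rfl fun j _ => by ring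

theorem stmt_16 (m n : ℕ) (hn : 1 ≤ n) (a : ℝ) :
    ∑ j ∈ Finset.range (m + 1), (-4 : ℝ) ^ j * (Nat.choose (m + j) (2 * j)) *
      ∑ k ∈ Finset.range n, Real.sin (a + 2 * k * π / n) * Real.cos (a + 2 * k * π / n) ^ (2 * j)
    = (-1 : ℝ) ^ m * ∑ k ∈ Finset.range n, Real.sin ((2 * m + 1) * (a + 2 * k * π / n)) :=
  stmt_16_general m n a
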